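/- arXiv:2108.00125 — 2 statements merged into one kernel-verified Lean document; each statement's English description precedes it below -/
import Mathlib

section
/- If β_ω(x) < 0, then d_ω(x) ≠ 0 and max_{i=1,…,m} F_i′(x; d_ω(x)) ≤ −(ω/2)‖d_ω(x)‖²; in particular the direction d_ω(x) is a common descent direction for F_1,…,F_m at x. -/
open Filter Topology
open scoped RealInnerProductSpace

noncomputable section

/-- `Euc n` is Euclidean `n`-space `ℝ^n`. -/
abbrev Euc (n : ℕ) := EuclideanSpace ℝ (Fin n)

/-- `HasDirDeriv f x d D` : the one-sided directional derivative of `f` at `x`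
in direction `d` exists and equals `D`, i.e. `(f (x + α • d) - f x)/α → D` as `α → 0⁺`. -/
def HasDirDeriv {n : ℕ} (f : Euc n → ℝ) (x d : Euc n) (D : ℝ) : Prop :=
  Filter.Tendsto (fun α : ℝ => (f (x + α • d) - f x) / α)
    (nhdsWithin 0 (Set.Ioi 0)) (nhds D)

/-- `x` is Pareto stationary for the objectives `F i`:
for every direction `d`, `max_i F_i'(x; d) ≥ 0`, i.e. some objective has
nonnegative directional derivative in direction `d`. -/
def ParetoStationary {n m : ℕ} (F : Fin m → Euc n → ℝ) (x : Euc n) : Prop :=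
  ∀ d : Euc n, ∃ i : Fin m, ∃ D : ℝ, HasDirDeriv (F i) x d D ∧ 0 ≤ D

/-- `θ_x(d) = max_i { ⟪∇g_i(x), d⟫ + ½⟪d, B_i(x) d⟫ + h_i(x+d) - h_i(x) }`. -/
def theta {n m : ℕ} (g h : Fin m → Euc n → ℝ)
    (B : Fin m → Euc n → (Euc n →L[ℝ] Euc n)) (x d : Euc n) : ℝ :=
  ⨆ i : Fin m, (⟪gradient (g i) x, d⟫ + (1 / 2) * ⟪d, B i x d⟫ + h i (x + d) - h i x)

/-- `φ_{ω,x}(d) = θ_x(d) + (ω/2)‖d‖²`. -/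
def phi {n m : ℕ} (g h : Fin m → Euc n → ℝ)
    (B : Fin m → Euc n → (Euc n →L[ℝ] Euc n)) (ω : ℝ) (x d : Euc n) : ℝ :=
  theta g h B x d + (ω / 2) * ‖d‖ ^ 2

/-!
Along the ray `t ↦ x + t • d` the smooth part `g_i` has derivative `⟪∇g_i(x), d⟫`, and the convex
part `h_i` has a right derivative bounded by its secant slope `h_i(x + d) - h_i(x)` on `[0, 1]`.
Hence `F_i'(x; d)` is at most the `i`-th term of `θ_x(d)` minus `½⟪d, B_i(x) d⟫ ≥ 0`, so
`max_i F_i'(x; d) ≤ θ_x(d) = β_ω(x) - (ω/2)‖d‖² < -(ω/2)‖d‖²` for `d = d_ω(x)`.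
Finally `d_ω(x) ≠ 0` because `φ_{ω,x}(0) = 0`.
-/

open Set

section DirDeriv

variable {n : ℕ} {f g : Euc n → ℝ} {x d : Euc n} {D E : ℝ}

theorem hasDirDeriv_iff_hasDerivWithinAt :
    HasDirDeriv f x d D ↔ HasDerivWithinAt (fun t : ℝ => f (x + t • d)) D (Ioi 0) 0 := by
  rw [hasDerivWithinAt_iff_tendsto_slope' self_notMem_Ioi, HasDirDeriv]
  refine tendsto_congr fun t => ?_
  simp [slope_def_field]

theorem HasDirDeriv.add (hf : HasDirDeriv f x d D) (hg : HasDirDeriv g x d E) :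
    HasDirDeriv (fun y => f y + g y) x d (D + E) :=
  hasDirDeriv_iff_hasDerivWithinAt.2 <|
    (hasDirDeriv_iff_hasDerivWithinAt.1 hf).add (hasDirDeriv_iff_hasDerivWithinAt.1 hg)

theorem DifferentiableAt.hasDirDeriv_inner_gradient (hf : DifferentiableAt ℝ f x) (d : Euc n) :
    HasDirDeriv f x d ⟪gradient f x, d⟫ := by
  have hline := hf.hasGradientAt.hasFDerivAt.hasLineDerivAt d
  rw [InnerProductSpace.toDual_apply_apply] at hline
  exact hasDirDeriv_iff_hasDerivWithinAt.2 hline.hasDerivWithinAt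

theorem ConvexOn.exists_hasDirDeriv_le (hf : ConvexOn ℝ univ f) (x d : Euc n) :
    ∃ D, HasDirDeriv f x d D ∧ D ≤ f (x + d) - f x := by
  have hray : ConvexOn ℝ univ (fun t : ℝ => f (x + t • d)) := by
    simpa [Function.comp_def, AffineMap.lineMap_apply, add_comm] using
      hf.comp_affineMap (AffineMap.lineMap x (x + d))
  have h0 : (0 : ℝ) ∈ interior univ := by simp
  refine ⟨_, hasDirDeriv_iff_hasDerivWithinAt.2
    (hray.hasDerivWithinAt_rightDeriv_of_mem_interior h0), ?_⟩
  simpa [slope_def_field] using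
    hray.rightDeriv_le_slope_of_mem_interior h0 (mem_univ 1) zero_lt_one

end DirDeriv

theorem phi_zero {n m : ℕ} (g h : Fin m → Euc n → ℝ)
    (B : Fin m → Euc n → (Euc n →L[ℝ] Euc n)) (ω : ℝ) (x : Euc n) : phi g h B ω x 0 = 0 := by
  simp [phi, theta, Real.iSup_const_zero]

theorem neg_beta_imp_descent_direction_general
    {n m : ℕ} (g h : Fin m → Euc n → ℝ)
    (B : Fin m → Euc n → (Euc n →L[ℝ] Euc n))
    (hg : ∀ i, ContDiff ℝ 2 (g i))
    (hh : ∀ i, ConvexOn ℝ Set.univ (h i))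
    (hBpos : ∀ i x (d : Euc n), d ≠ 0 → 0 < ⟪d, B i x d⟫)
    (ω : ℝ)
    (dω : Euc n → Euc n)
    (x : Euc n)
    (hβ : phi g h B ω x (dω x) < 0) :
    dω x ≠ 0 ∧ ∃ D : Fin m → ℝ,
      (∀ i, HasDirDeriv (fun y => g i y + h i y) x (dω x) (D i)) ∧
      (⨆ i, D i) ≤ -(ω / 2) * ‖dω x‖ ^ 2 := by
  set d := dω x
  have hd : d ≠ 0 := by
    rintro hd
    rw [hd, phi_zero] at hβ
    exact hβ.false
  choose L hL hLle using fun i => (hh i).exists_hasDirDeriv_le x d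
  refine ⟨hd, fun i => ⟪gradient (g i) x, d⟫ + L i, fun i =>
    (((hg i).differentiable two_ne_zero x).hasDirDeriv_inner_gradient d).add (hL i), ?_⟩
  have hle_theta : (⨆ i, (⟪gradient (g i) x, d⟫ + L i)) ≤ theta g h B x d :=
    Finite.ciSup_mono fun i => by linarith [hLle i, hBpos i x d hd]
  rw [phi] at hβ
  linarith

/-- if β_ω(x) < 0 then d_ω(x) ≠ 0 and
max_i F_i′(x; d_ω(x)) ≤ −(ω/2)‖d_ω(x)‖². -/
theorem neg_beta_imp_descent_direction
    {n m : ℕ} (g h : Fin m → Euc n → ℝ)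
    (B : Fin m → Euc n → (Euc n →L[ℝ] Euc n))
    (hm : 0 < m)
    (hg : ∀ i, ContDiff ℝ 2 (g i))
    (hsc : ∀ i, ∃ a : ℝ, 0 < a ∧ ∀ x y : Euc n,
      a * ‖x - y‖ ^ 2 ≤ ⟪gradient (g i) x - gradient (g i) y, x - y⟫)
    (hh : ∀ i, ConvexOn ℝ Set.univ (h i))
    (hBsymm : ∀ i x (u v : Euc n), ⟪B i x u, v⟫ = ⟪u, B i x v⟫)
    (hBpos : ∀ i x (d : Euc n), d ≠ 0 → 0 < ⟪d, B i x d⟫)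
    (ω : ℝ) (hω : 0 < ω)
    (dω : Euc n → Euc n)
    (hmin : ∀ y d, phi g h B ω y (dω y) ≤ phi g h B ω y d)
    (x : Euc n)
    (hβ : phi g h B ω x (dω x) < 0) :
    dω x ≠ 0 ∧ ∃ D : Fin m → ℝ,
      (∀ i, HasDirDeriv (fun y => g i y + h i y) x (dω x) (D i)) ∧
      (⨆ i, D i) ≤ -(ω / 2) * ‖dω x‖ ^ 2 :=
  neg_beta_imp_descent_direction_general g h B hg hh hBpos ω dω x hβ
end
end

section
/- Suppose each gradient ∇g_i is Lipschitz continuous on ℝ^n with constant L and let ω > L/2. Let {x^k} ⊂ ℝ^n be defined by x^{k+1} = x^k + d^k with d^k := d_ω(x^k). If {F_i(x^k)}_k is bounded from below for every i = 1,…,m, then ∑_{k=0}^∞ ‖d^k‖² < ∞ and in particular lim_{k→∞} ‖d^k‖² = 0. -/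
/-! Write `d = d_ω(x)`. Convexity of the `h_i` and `B_i(x) ⪰ 0` give `θ_x(t d) ≤ t θ_x(d)` for
`t ∈ [0, 1]`, so comparing `φ_{ω,x}(d) ≤ φ_{ω,x}(t d)` and letting `t → 1` yields
`θ_x(d) ≤ -ω‖d‖²`. With the descent lemma for `g_i` this is the sufficient decrease
`F_i(x + d) ≤ F_i(x) - (ω - L/2)‖d‖²`, and the partial sums of `‖d^k‖²` telescope against the
bounded-below sequence `F_i(x^k)`. -/

open Filter Topology
open scoped RealInnerProductSpace

noncomputable section

open Set

section Descent

variable {E : Type*} [NormedAddCommGroup E] [InnerProductSpace ℝ E] [CompleteSpace E]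

lemma Differentiable.apply_add_le_of_lipschitzWith_gradient {f : E → ℝ}
    (hf : Differentiable ℝ f) {L : NNReal} (hL : LipschitzWith L (gradient f)) (x d : E) :
    f (x + d) ≤ f x + ⟪gradient f x, d⟫ + (L / 2) * ‖d‖ ^ 2 := by
  set ψ : ℝ → ℝ := fun t => f (x + t • d) - t * ⟪gradient f x, d⟫ - (L / 2) * ‖d‖ ^ 2 * t ^ 2
  have hψ' : ∀ t, HasDerivAt ψ
      (⟪gradient f (x + t • d), d⟫ - ⟪gradient f x, d⟫ - (L / 2) * ‖d‖ ^ 2 * (2 * t)) t := by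
    intro t
    have hline : HasDerivAt (fun t : ℝ => x + t • d) d t := by
      simpa using ((hasDerivAt_id t).smul_const d).const_add x
    have hfline := ((hf _).hasGradientAt.hasFDerivAt).comp_hasDerivAt t hline
    simp only [InnerProductSpace.toDual_apply_apply] at hfline
    exact ((hfline.sub (hasDerivAt_mul_const _)).sub
      ((hasDerivAt_pow 2 t).const_mul _)).congr_deriv (by push_cast; ring)
  have hanti : AntitoneOn ψ (Ici 0) := by
    refine antitoneOn_of_hasDerivWithinAt_nonpos (convex_Ici 0)
      (fun t _ => (hψ' t).continuousAt.continuousWithinAt)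
      (fun t _ => (hψ' t).hasDerivWithinAt) fun t ht => ?_
    rw [interior_Ici] at ht
    have hgrad : ⟪gradient f (x + t • d) - gradient f x, d⟫ ≤ L * (t * ‖d‖) * ‖d‖ :=
      calc ⟪gradient f (x + t • d) - gradient f x, d⟫
          ≤ ‖gradient f (x + t • d) - gradient f x‖ * ‖d‖ := real_inner_le_norm _ _
        _ ≤ L * ‖(x + t • d) - x‖ * ‖d‖ := by gcongr; exact hL.norm_sub_le _ _
        _ = L * (t * ‖d‖) * ‖d‖ := by
          rw [add_sub_cancel_left, norm_smul, Real.norm_of_nonneg (le_of_lt ht)]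
    rw [inner_sub_left] at hgrad
    linarith
  have h01 := hanti (mem_Ici.2 le_rfl) (zero_le_one' ℝ) zero_le_one
  simp only [ψ, zero_smul, one_smul, add_zero, zero_mul, one_mul, sub_zero,
    ne_eq, OfNat.ofNat_ne_zero, not_false_eq_true, zero_pow, one_pow, mul_one] at h01
  linarith

end Descent

lemma le_neg_mul_sq_of_isMinOn_add_sq {E : Type*} [NormedAddCommGroup E] [NormedSpace ℝ E]
    {θ : E → ℝ} {ω : ℝ} {d : E} (hθ : ∀ t ∈ Ioo (0 : ℝ) 1, θ (t • d) ≤ t * θ d)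
    (hmin : IsMinOn (fun e => θ e + ω / 2 * ‖e‖ ^ 2) univ d) :
    θ d ≤ -ω * ‖d‖ ^ 2 := by
  have hbound : ∀ t ∈ Ioo (0 : ℝ) 1, θ d ≤ -(ω / 2) * (1 + t) * ‖d‖ ^ 2 := by
    intro t ht
    have hcmp : θ d + ω / 2 * ‖d‖ ^ 2 ≤ θ (t • d) + ω / 2 * ‖t • d‖ ^ 2 := hmin (mem_univ _)
    rw [norm_smul, Real.norm_of_nonneg ht.1.le] at hcmp
    have h1t : 0 < 1 - t := sub_pos.2 ht.2
    -- dividing `(1 - t) θ d ≤ (ω / 2) (t² - 1) ‖d‖²` by `1 - t`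
    nlinarith [hθ t ht]
  have hlim : Tendsto (fun t : ℝ => -(ω / 2) * (1 + t) * ‖d‖ ^ 2) (𝓝[<] 1)
      (𝓝 (-ω * ‖d‖ ^ 2)) :=
    tendsto_nhdsWithin_of_tendsto_nhds (Continuous.tendsto' (by fun_prop) 1 _ (by ring))
  exact ge_of_tendsto hlim (eventually_of_mem (Ioo_mem_nhdsLT zero_lt_one) hbound)

lemma summable_of_mul_le_sub_succ {a u : ℕ → ℝ} {c C : ℝ} (hc : 0 < c) (ha : ∀ k, 0 ≤ a k)
    (hdec : ∀ k, c * a k ≤ u k - u (k + 1)) (hbdd : ∀ k, C ≤ u k) : Summable a := by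
  refine summable_of_sum_range_le ha (c := (u 0 - C) / c) fun N => ?_
  rw [le_div_iff₀' hc, Finset.mul_sum]
  calc ∑ k ∈ Finset.range N, c * a k
      ≤ ∑ k ∈ Finset.range N, (u k - u (k + 1)) := Finset.sum_le_sum fun k _ => hdec k
    _ = u 0 - u N := Finset.sum_range_sub' u N
    _ ≤ u 0 - C := by linarith [hbdd N]

section Theta

variable {n m : ℕ} {g h : Fin m → Euc n → ℝ} {B : Fin m → Euc n → (Euc n →L[ℝ] Euc n)}

lemma le_theta (x d : Euc n) (i : Fin m) :
    ⟪gradient (g i) x, d⟫ + (1 / 2) * ⟪d, B i x d⟫ + h i (x + d) - h i x ≤ theta g h B x d :=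
  le_ciSup (f := fun i =>
    ⟪gradient (g i) x, d⟫ + (1 / 2) * ⟪d, B i x d⟫ + h i (x + d) - h i x)
    (Set.finite_range _).bddAbove i

lemma theta_smul_le [Nonempty (Fin m)] (hh : ∀ i, ConvexOn ℝ univ (h i)) {x d : Euc n}
    (hB : ∀ i, 0 ≤ ⟪d, B i x d⟫) {t : ℝ} (ht : t ∈ Icc (0 : ℝ) 1) :
    theta g h B x (t • d) ≤ t * theta g h B x d := by
  refine ciSup_le fun i => ?_
  have hconv : h i (x + t • d) ≤ (1 - t) * h i x + t * h i (x + d) := by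
    have hseg : x + t • d = (1 - t) • x + t • (x + d) := by
      rw [smul_add, sub_smul, one_smul]; abel
    simpa only [hseg, smul_eq_mul] using
      (hh i).2 (mem_univ x) (mem_univ (x + d)) (sub_nonneg.2 ht.2) ht.1 (by ring)
  have hquad : t ^ 2 * ⟪d, B i x d⟫ ≤ t * ⟪d, B i x d⟫ :=
    mul_le_mul_of_nonneg_right (by nlinarith [ht.1, ht.2]) (hB i)
  have hterm := mul_le_mul_of_nonneg_left (le_theta (g := g) (h := h) (B := B) x d i) ht.1
  rw [map_smul, real_inner_smul_right, real_inner_smul_left, real_inner_smul_right]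
  nlinarith

lemma theta_le_neg_mul_sq_of_isMinOn [Nonempty (Fin m)] (hh : ∀ i, ConvexOn ℝ univ (h i))
    {ω : ℝ} {x d : Euc n} (hB : ∀ i, 0 ≤ ⟪d, B i x d⟫) (hmin : IsMinOn (phi g h B ω x) univ d) :
    theta g h B x d ≤ -ω * ‖d‖ ^ 2 :=
  le_neg_mul_sq_of_isMinOn_add_sq (fun _ ht => theta_smul_le hh hB (Ioo_subset_Icc_self ht)) hmin

lemma add_add_mul_sq_le_of_isMinOn_phi (hh : ∀ i, ConvexOn ℝ univ (h i)) {L : NNReal} {ω : ℝ}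
    {y d : Euc n} (hB : ∀ i, 0 ≤ ⟪d, B i y d⟫) (hmin : IsMinOn (phi g h B ω y) univ d)
    (i : Fin m) (hg : Differentiable ℝ (g i)) (hL : LipschitzWith L (gradient (g i))) :
    g i (y + d) + h i (y + d) + (ω - L / 2) * ‖d‖ ^ 2 ≤ g i y + h i y := by
  have : Nonempty (Fin m) := ⟨i⟩
  have hdesc := hg.apply_add_le_of_lipschitzWith_gradient hL y d
  have hterm := le_theta (g := g) (h := h) (B := B) y d i
  have hθ := theta_le_neg_mul_sq_of_isMinOn hh hB hmin
  nlinarith [hB i]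

end Theta

theorem no_line_search_summable_general
    {n m : ℕ} (g h : Fin m → Euc n → ℝ)
    (B : Fin m → Euc n → (Euc n →L[ℝ] Euc n))
    (hm : 0 < m)
    (hg : ∀ i, ContDiff ℝ 2 (g i))
    (hh : ∀ i, ConvexOn ℝ Set.univ (h i))
    (hBpos : ∀ i x (d : Euc n), d ≠ 0 → 0 < ⟪d, B i x d⟫)
    (L : NNReal) (hL : ∀ i, LipschitzWith L (gradient (g i)))
    (ω : ℝ) (hω : (L : ℝ) / 2 < ω)
    (dω : Euc n → Euc n)
    (hmin : ∀ y d, phi g h B ω y (dω y) ≤ phi g h B ω y d)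
    (x : ℕ → Euc n)
    (hstep : ∀ k, x (k + 1) = x k + dω (x k))
    (hbdd : ∀ i, ∃ C : ℝ, ∀ k, C ≤ g i (x k) + h i (x k)) :
    Summable (fun k => ‖dω (x k)‖ ^ 2) ∧
      Filter.Tendsto (fun k => ‖dω (x k)‖ ^ 2) atTop (nhds 0) := by
  have hB : ∀ i y (d : Euc n), 0 ≤ ⟪d, B i y d⟫ := fun i y d => by
    rcases eq_or_ne d 0 with rfl | hd
    · simp
    · exact (hBpos i y d hd).le
  let i₀ : Fin m := ⟨0, hm⟩
  obtain ⟨C, hC⟩ := hbdd i₀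
  have hdecrease : ∀ k, (ω - L / 2) * ‖dω (x k)‖ ^ 2 ≤
      (g i₀ (x k) + h i₀ (x k)) - (g i₀ (x (k + 1)) + h i₀ (x (k + 1))) := fun k => by
    have := add_add_mul_sq_le_of_isMinOn_phi hh (fun i => hB i (x k) _) (isMinOn_univ_iff.2 (hmin (x k)))
      i₀ ((hg i₀).differentiable (by norm_num)) (hL i₀)
    rw [hstep k]
    linarith
  have hsum := summable_of_mul_le_sub_succ (sub_pos.2 hω) (fun k => by positivity) hdecrease hC
  exact ⟨hsum, hsum.tendsto_atTop_zero⟩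

/-- for the method without line searches, ∑ ‖d^k‖² < ∞ and ‖d^k‖² → 0. -/
theorem no_line_search_summable
    {n m : ℕ} (g h : Fin m → Euc n → ℝ)
    (B : Fin m → Euc n → (Euc n →L[ℝ] Euc n))
    (hm : 0 < m)
    (hg : ∀ i, ContDiff ℝ 2 (g i))
    (hsc : ∀ i, ∃ a : ℝ, 0 < a ∧ ∀ x y : Euc n,
      a * ‖x - y‖ ^ 2 ≤ ⟪gradient (g i) x - gradient (g i) y, x - y⟫)
    (hh : ∀ i, ConvexOn ℝ Set.univ (h i))
    (hBsymm : ∀ i x (u v : Euc n), ⟪B i x u, v⟫ = ⟪u, B i x v⟫)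
    (hBpos : ∀ i x (d : Euc n), d ≠ 0 → 0 < ⟪d, B i x d⟫)
    (L : NNReal) (hL : ∀ i, LipschitzWith L (gradient (g i)))
    (ω : ℝ) (hω : (L : ℝ) / 2 < ω)
    (dω : Euc n → Euc n)
    (hmin : ∀ y d, phi g h B ω y (dω y) ≤ phi g h B ω y d)
    (x : ℕ → Euc n)
    (hstep : ∀ k, x (k + 1) = x k + dω (x k))
    (hbdd : ∀ i, ∃ C : ℝ, ∀ k, C ≤ g i (x k) + h i (x k)) :
    Summable (fun k => ‖dω (x k)‖ ^ 2) ∧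
      Filter.Tendsto (fun k => ‖dω (x k)‖ ^ 2) atTop (nhds 0) :=
  no_line_search_summable_general g h B hm hg hh hBpos L hL ω hω dω hmin x hstep hbdd
end
end
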